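/- Let n ≥ 1 and let W = (W₁,…,Wₙ) and W' = (W'₁,…,W'ₙ) be weighted left multi-shifts on F²(Hₙ) associated with weight sequences μ and μ' of nonnegative reals (with the boundedness condition), both satisfying the truncation property: whenever the weight of a word β = g_{i₁}⋯g_{i_k} is nonzero, the weights of all its proper suffixes are also nonzero. Assume μ_β = 0 if and only if μ'_β = 0, for every β with |β| ≥ 1. Then W is jointly unitarily equivalent to W' (i.e., there is a unitary A on F²(Hₙ) with A W_i = W'_i A for all i) if and only if μ_β = μ'_β for every β ∈ 𝔽ₙ⁺ with |β| ≥ 1. -/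

import Mathlib

/-
A unitary `A` intertwining the shifts maps the vacuum `e₀` to `c e₀` plus a vector supported on
words of zero weight: every other basis vector lies in the range of some `W'ᵢ`, which `A⋆` carries
into the range of `Wᵢ`, orthogonal to `e₀`. By truncation every word operator `W'_δ` kills those
components, so comparing norms in `A (W_δ e₀) = W'_δ (A e₀)` gives `‖W_δ e₀‖ = |c| ‖W'_δ e₀‖`,
where `‖W_δ e₀‖` is the product of the weights of the suffixes of `δ`. The same argument for `A⋆`,
whose vacuum coefficient is `conj c`, forces `|c| = 1` as soon as one of these products is nonzero,
and the weights are then quotients of consecutive products.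
-/

open Filter ContinuousLinearMap
open scoped ComplexConjugate

noncomputable section

attribute [local instance] Classical.decEq

abbrev Word (n : ℕ) := FreeMonoid (Fin n)

abbrev Fock (n : ℕ) := lp (fun _ : Word n => ℂ) 2

def fockE {n : ℕ} (α : Word n) : Fock n := lp.single 2 α 1

def wordOp {n : ℕ} {H : Type*} [NormedAddCommGroup H] [InnerProductSpace ℂ H]
    (T : Fin n → H →L[ℂ] H) (α : Word n) : H →L[ℂ] H :=
  ((FreeMonoid.toList α).map T).prod

def wordOfFn {n k : ℕ} (f : Fin k → Fin n) : Word n := FreeMonoid.ofList (List.ofFn f)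

def rowSum {n : ℕ} {H : Type*} [NormedAddCommGroup H] [InnerProductSpace ℂ H]
    [CompleteSpace H] (T : Fin n → H →L[ℂ] H) (k : ℕ) : H →L[ℂ] H :=
  ∑ f : Fin k → Fin n, wordOp T (wordOfFn f) * adjoint (wordOp T (wordOfFn f))

def jsr {n : ℕ} {H : Type*} [NormedAddCommGroup H] [InnerProductSpace ℂ H]
    [CompleteSpace H] (T : Fin n → H →L[ℂ] H) : ℝ :=
  limUnder atTop fun k : ℕ => ‖rowSum T k‖ ^ ((1 : ℝ) / (2 * k))

def muProd {n : ℕ} (μ : Word n → ℝ) (β α : Word n) : ℝ :=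
  ((List.range (FreeMonoid.length β)).map
    fun j => μ (FreeMonoid.ofList ((FreeMonoid.toList β).drop j) * α)).prod

def IsWeightedShift {n : ℕ} (μ : Word n → ℝ) (W : Fin n → Fock n →L[ℂ] Fock n) : Prop :=
  ∀ (i : Fin n) (α : Word n),
    W i (fockE α) = (μ (FreeMonoid.of i * α) : ℂ) • fockE (FreeMonoid.of i * α)

def BddWeights {n : ℕ} (μ : Word n → ℝ) : Prop :=
  ∀ i : Fin n, BddAbove (Set.range fun α : Word n => μ (FreeMonoid.of i * α))

def IsWeightedShiftTensor {n : ℕ} {H : Type*} [NormedAddCommGroup H] [InnerProductSpace ℂ H]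
    (μ : Word n → ℝ)
    (Wt : Fin n → lp (fun _ : Word n => H) 2 →L[ℂ] lp (fun _ : Word n => H) 2) : Prop :=
  ∀ (i : Fin n) (α : Word n) (h : H),
    Wt i (lp.single 2 α h) = (μ (FreeMonoid.of i * α) : ℂ) • lp.single 2 (FreeMonoid.of i * α) h

def polyOp {n : ℕ} {H : Type*} [NormedAddCommGroup H] [InnerProductSpace ℂ H]
    (T : Fin n → H →L[ℂ] H) (c : Word n →₀ ℂ) : H →L[ℂ] H :=
  c.sum fun α z => z • wordOp T α

def TruncProp {n : ℕ} (μ : Word n → ℝ) : Prop :=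
  ∀ β : Word n, μ β ≠ 0 → ∀ j : ℕ, j < FreeMonoid.length β →
    μ (FreeMonoid.ofList ((FreeMonoid.toList β).drop j)) ≠ 0

open scoped InnerProductSpace

theorem star_mul_eq_mul_star_of_mem_unitary {R : Type*} [Monoid R] [StarMul R] {u a b : R}
    (hu : u ∈ unitary R) (h : u * a = b * u) : star u * b = a * star u :=
  calc star u * b = star u * (b * u) * star u := by
        rw [mul_assoc, mul_assoc, Unitary.mul_star_self_of_mem hu, mul_one]
    _ = a * star u := by
        rw [← h, ← mul_assoc, Unitary.star_mul_self_of_mem hu, one_mul]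

theorem FreeMonoid.length_ofList_drop_toList {α : Type*} (δ : FreeMonoid α) (j : ℕ) :
    (FreeMonoid.ofList (δ.toList.drop j)).length = δ.length - j :=
  List.length_drop

theorem FreeMonoid.of_mul_ne_one {α : Type*} (a : α) (x : FreeMonoid α) :
    FreeMonoid.of a * x ≠ 1 :=
  fun h => List.cons_ne_nil a x.toList (congrArg FreeMonoid.toList h)

section wordOp

variable {n : ℕ} {H K : Type*} [NormedAddCommGroup H] [InnerProductSpace ℂ H]
  [NormedAddCommGroup K] [InnerProductSpace ℂ K]

theorem wordOp_one (T : Fin n → H →L[ℂ] H) : wordOp T 1 = 1 := rfl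

theorem wordOp_of_mul (T : Fin n → H →L[ℂ] H) (i : Fin n) (δ : Word n) :
    wordOp T (FreeMonoid.of i * δ) = T i * wordOp T δ := rfl

theorem map_wordOp_of_comp_eq {T : Fin n → H →L[ℂ] H} {T' : Fin n → K →L[ℂ] K}
    {A : H →L[ℂ] K} (hA : ∀ i, A.comp (T i) = (T' i).comp A) (δ : Word n) (x : H) :
    A (wordOp T δ x) = wordOp T' δ (A x) := by
  induction δ using FreeMonoid.recOn with
  | one => rfl
  | of_mul i δ ih =>
    rw [wordOp_of_mul, wordOp_of_mul, mul_apply_eq_comp, mul_apply_eq_comp, ← ih]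
    exact congr($(hA i) (wordOp T δ x))

end wordOp

variable {n : ℕ}

theorem inner_fockE_left (γ : Word n) (x : Fock n) : ⟪fockE γ, x⟫_ℂ = x γ := by
  simp [fockE, lp.inner_single_left]

theorem norm_fockE (γ : Word n) : ‖fockE γ‖ = 1 := by
  simp [fockE, lp.norm_single]

theorem hasSum_smul_apply_fockE {E : Type*} [NormedAddCommGroup E] [NormedSpace ℂ E]
    (T : Fock n →L[ℂ] E) (x : Fock n) : HasSum (fun γ => x γ • T (fockE γ)) (T x) := by
  have hx := lp.hasSum_single (E := fun _ : Word n => ℂ) (p := 2) ENNReal.ofNat_ne_top x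
  convert hx.mapL T using 2 with γ
  rw [fockE, ← map_smul, ← lp.single_smul, smul_eq_mul, mul_one]

theorem ext_fockE {E : Type*} [NormedAddCommGroup E] [NormedSpace ℂ E]
    {T T' : Fock n →L[ℂ] E} (h : ∀ γ, T (fockE γ) = T' (fockE γ)) : T = T' := by
  ext x
  have hT := hasSum_smul_apply_fockE T x
  simp only [h] at hT
  exact hT.unique (hasSum_smul_apply_fockE T' x)

theorem muProd_one (μ : Word n → ℝ) (α : Word n) : muProd μ 1 α = 1 := rfl

theorem muProd_of_mul (μ : Word n → ℝ) (i : Fin n) (δ α : Word n) :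
    muProd μ (FreeMonoid.of i * δ) α = μ (FreeMonoid.of i * δ * α) * muProd μ δ α := by
  simp only [muProd, FreeMonoid.length_mul, FreeMonoid.length_of, add_comm 1,
    List.range_succ_eq_map, List.map_cons, List.prod_cons, List.map_map]
  rfl

theorem muProd_nonneg {μ : Word n → ℝ} (hμ : ∀ β : Word n, 1 ≤ β.length → 0 ≤ μ β)
    (δ α : Word n) : 0 ≤ muProd μ δ α := by
  refine List.prod_nonneg fun a ha => ?_
  obtain ⟨j, hj, rfl⟩ := List.mem_map.mp ha
  apply hμ
  rw [List.mem_range] at hj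
  rw [FreeMonoid.length_mul, FreeMonoid.length_ofList_drop_toList]
  omega

theorem muProd_pos {μ : Word n → ℝ} (hμ : ∀ β : Word n, 1 ≤ β.length → 0 ≤ μ β)
    (htr : TruncProp μ) {δ : Word n} (hδ : μ δ ≠ 0) : 0 < muProd μ δ 1 := by
  refine List.prod_pos fun a ha => ?_
  obtain ⟨j, hj, rfl⟩ := List.mem_map.mp ha
  rw [List.mem_range] at hj
  rw [mul_one]
  refine (hμ _ ?_).lt_of_ne' (htr δ hδ j hj)
  rw [FreeMonoid.length_ofList_drop_toList]
  omega

theorem TruncProp.apply_mul_eq_zero {μ : Word n → ℝ} (htr : TruncProp μ) (δ : Word n)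
    {γ : Word n} (hγ : γ ≠ 1) (hz : μ γ = 0) : μ (δ * γ) = 0 := by
  by_contra h
  have hlt : δ.length < (δ * γ).length := by
    rw [FreeMonoid.length_mul, Nat.lt_add_right_iff_pos, Nat.pos_iff_ne_zero]
    exact mt FreeMonoid.length_eq_zero.mp hγ
  apply htr (δ * γ) h δ.length hlt
  rwa [FreeMonoid.toList_mul, FreeMonoid.length, List.drop_left, FreeMonoid.ofList_toList]

namespace IsWeightedShift

variable {μ μ' : Word n → ℝ} {W W' : Fin n → Fock n →L[ℂ] Fock n}

theorem wordOp_fockE (hW : IsWeightedShift μ W) (δ α : Word n) :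
    wordOp W δ (fockE α) = (muProd μ δ α : ℂ) • fockE (δ * α) := by
  induction δ using FreeMonoid.recOn with
  | one => simp [wordOp_one, muProd_one]
  | of_mul i δ ih =>
    rw [wordOp_of_mul, mul_apply_eq_comp, ih, map_smul, hW i (δ * α), muProd_of_mul, smul_smul,
      mul_assoc]
    push_cast
    ring_nf

theorem inner_fockE_one_apply (hW : IsWeightedShift μ W) (i : Fin n) (x : Fock n) :
    ⟪fockE 1, W i x⟫_ℂ = 0 := by
  have hterm (γ : Word n) : ⟪fockE 1, W i (fockE γ)⟫_ℂ = 0 := by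
    rw [hW i γ, inner_smul_right, inner_fockE_left, fockE,
      lp.single_apply_ne _ _ _ (FreeMonoid.of_mul_ne_one i γ).symm, mul_zero]
  have hx := hasSum_smul_apply_fockE (innerSL ℂ (fockE 1) ∘L W i) x
  simp only [ContinuousLinearMap.comp_apply, innerSL_apply_apply, hterm, smul_zero] at hx
  exact hx.unique hasSum_zero

theorem eq_of_weights_eq (hW : IsWeightedShift μ W) (hW' : IsWeightedShift μ' W')
    (h : ∀ β : Word n, 1 ≤ β.length → μ β = μ' β) : W = W' := by
  funext i
  refine ext_fockE fun γ => ?_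
  rw [hW i γ, hW' i γ, h _ (by simp [FreeMonoid.length_mul, FreeMonoid.length_of])]

end IsWeightedShift

section Intertwining

variable {μ μ' : Word n → ℝ} {W W' : Fin n → Fock n →L[ℂ] Fock n} {A : Fock n →L[ℂ] Fock n}

theorem star_comp_eq_of_comp_eq (hA : A ∈ unitary (Fock n →L[ℂ] Fock n))
    (hAW : ∀ i, A.comp (W i) = (W' i).comp A) (i : Fin n) :
    (star A).comp (W' i) = (W i).comp (star A) := by
  show star A * W' i = W i * star A
  exact star_mul_eq_mul_star_of_mem_unitary hA (hAW i)

theorem inner_fockE_of_mul_apply_fockE_one (hW : IsWeightedShift μ W)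
    (hW' : IsWeightedShift μ' W') (hA : A ∈ unitary (Fock n →L[ℂ] Fock n))
    (hAW : ∀ i, A.comp (W i) = (W' i).comp A) (i : Fin n) (γ : Word n)
    (hγ : μ' (FreeMonoid.of i * γ) ≠ 0) :
    ⟪fockE (FreeMonoid.of i * γ), A (fockE 1)⟫_ℂ = 0 := by
  have hrange :
      fockE (FreeMonoid.of i * γ) = (μ' (FreeMonoid.of i * γ) : ℂ)⁻¹ • W' i (fockE γ) := by
    rw [hW' i γ, smul_smul, inv_mul_cancel₀ (by exact_mod_cast hγ), one_smul]
  have hstar : adjoint A (W' i (fockE γ)) = W i (adjoint A (fockE γ)) := by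
    rw [← star_eq_adjoint]
    exact congr($(star_comp_eq_of_comp_eq hA hAW i) (fockE γ))
  rw [hrange, inner_smul_left, ← adjoint_inner_left, hstar,
    inner_eq_zero_symm.mp (hW.inner_fockE_one_apply i _), mul_zero]

theorem wordOp_of_mul_apply_fockE_one (hW : IsWeightedShift μ W)
    (hW' : IsWeightedShift μ' W') (htr' : TruncProp μ') (hA : A ∈ unitary (Fock n →L[ℂ] Fock n))
    (hAW : ∀ i, A.comp (W i) = (W' i).comp A) (i : Fin n) (δ : Word n) :
    wordOp W' (FreeMonoid.of i * δ) (A (fockE 1)) =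
      ⟪fockE 1, A (fockE 1)⟫_ℂ • (muProd μ' (FreeMonoid.of i * δ) 1 : ℂ) •
        fockE (FreeMonoid.of i * δ) := by
  set x := A (fockE 1)
  have hterm (γ : Word n) (hγ : γ ≠ 1) : x γ • wordOp W' (FreeMonoid.of i * δ) (fockE γ) = 0 := by
    cases γ using FreeMonoid.casesOn with
    | one => exact absurd rfl hγ
    | of_mul j γ =>
      by_cases hz : μ' (FreeMonoid.of j * γ) = 0
      · rw [hW'.wordOp_fockE, muProd_of_mul,
          htr'.apply_mul_eq_zero _ (FreeMonoid.of_mul_ne_one j γ) hz]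
        simp
      · rw [← inner_fockE_left, inner_fockE_of_mul_apply_fockE_one hW hW' hA hAW j γ hz,
          zero_smul]
  have hx := (hasSum_smul_apply_fockE (wordOp W' (FreeMonoid.of i * δ)) x).unique
    (hasSum_single 1 hterm)
  rw [hx, hW'.wordOp_fockE, mul_one, inner_fockE_left]

theorem muProd_eq_norm_inner_mul (hμ : ∀ β : Word n, 1 ≤ β.length → 0 ≤ μ β)
    (hμ' : ∀ β : Word n, 1 ≤ β.length → 0 ≤ μ' β) (hW : IsWeightedShift μ W)
    (hW' : IsWeightedShift μ' W') (htr' : TruncProp μ') (hA : A ∈ unitary (Fock n →L[ℂ] Fock n))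
    (hAW : ∀ i, A.comp (W i) = (W' i).comp A) (i : Fin n) (δ : Word n) :
    muProd μ (FreeMonoid.of i * δ) 1 =
      ‖⟪fockE 1, A (fockE 1)⟫_ℂ‖ * muProd μ' (FreeMonoid.of i * δ) 1 := by
  have hnorm := norm_map_of_mem_unitary hA (wordOp W (FreeMonoid.of i * δ) (fockE 1))
  rw [map_wordOp_of_comp_eq hAW, wordOp_of_mul_apply_fockE_one hW hW' htr' hA hAW,
    hW.wordOp_fockE, mul_one] at hnorm
  simpa only [norm_smul, norm_fockE, mul_one, Complex.norm_real, Real.norm_eq_abs,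
    abs_of_nonneg (muProd_nonneg hμ _ _), abs_of_nonneg (muProd_nonneg hμ' _ _)] using hnorm.symm

theorem muProd_eq_of_comp_eq (hμ : ∀ β : Word n, 1 ≤ β.length → 0 ≤ μ β)
    (hμ' : ∀ β : Word n, 1 ≤ β.length → 0 ≤ μ' β) (hW : IsWeightedShift μ W)
    (hW' : IsWeightedShift μ' W') (htr : TruncProp μ) (htr' : TruncProp μ')
    (hA : A ∈ unitary (Fock n →L[ℂ] Fock n)) (hAW : ∀ i, A.comp (W i) = (W' i).comp A)
    {i₀ : Fin n} {δ₀ : Word n} (h₀ : muProd μ (FreeMonoid.of i₀ * δ₀) 1 ≠ 0) (δ : Word n) :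
    muProd μ δ 1 = muProd μ' δ 1 := by
  have hforward := muProd_eq_norm_inner_mul hμ hμ' hW hW' htr' hA hAW
  have hbackward := muProd_eq_norm_inner_mul hμ' hμ hW' hW htr (Unitary.star_mem hA)
    (star_comp_eq_of_comp_eq hA hAW)
  set c := ‖⟪fockE 1, A (fockE 1)⟫_ℂ‖
  have hstar : ‖⟪fockE 1, star A (fockE 1)⟫_ℂ‖ = c := by
    rw [star_eq_adjoint, adjoint_inner_right, ← inner_conj_symm, RCLike.norm_conj]
  rw [hstar] at hbackward
  have hcc : c * c = 1 := by
    refine mul_right_cancel₀ h₀ ?_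
    rw [mul_assoc, ← hbackward, ← hforward, one_mul]
  have hc : c = 1 := by nlinarith [norm_nonneg ⟪fockE 1, A (fockE 1)⟫_ℂ]
  cases δ using FreeMonoid.casesOn with
  | one => rfl
  | of_mul i δ => rw [hforward, hc, one_mul]

theorem weight_eq_of_comp_eq (hμ : ∀ β : Word n, 1 ≤ β.length → 0 ≤ μ β)
    (hμ' : ∀ β : Word n, 1 ≤ β.length → 0 ≤ μ' β) (hW : IsWeightedShift μ W)
    (hW' : IsWeightedShift μ' W') (htr : TruncProp μ) (htr' : TruncProp μ')
    (hA : A ∈ unitary (Fock n →L[ℂ] Fock n)) (hAW : ∀ i, A.comp (W i) = (W' i).comp A)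
    {i : Fin n} {β : Word n} (hβ : μ (FreeMonoid.of i * β) ≠ 0) :
    μ (FreeMonoid.of i * β) = μ' (FreeMonoid.of i * β) := by
  have hpos := (muProd_pos hμ htr hβ).ne'
  have hprod := muProd_eq_of_comp_eq hμ hμ' hW hW' htr htr' hA hAW hpos
  have hsplit := hprod (FreeMonoid.of i * β)
  rw [muProd_of_mul, muProd_of_mul, mul_one, hprod β] at hsplit
  rw [muProd_of_mul, mul_one, hprod β] at hpos
  exact mul_right_cancel₀ (right_ne_zero_of_mul hpos) hsplit

end Intertwining

theorem stmt_8_general (n : ℕ) (μ μ' : Word n → ℝ)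
    (hμ : ∀ β : Word n, 1 ≤ FreeMonoid.length β → 0 ≤ μ β)
    (hμ' : ∀ β : Word n, 1 ≤ FreeMonoid.length β → 0 ≤ μ' β)
    (htr : TruncProp μ) (htr' : TruncProp μ')
    (W W' : Fin n → Fock n →L[ℂ] Fock n)
    (hW : IsWeightedShift μ W) (hW' : IsWeightedShift μ' W') :
    (∃ A : Fock n →L[ℂ] Fock n, A ∈ unitary (Fock n →L[ℂ] Fock n) ∧
        ∀ i, A.comp (W i) = (W' i).comp A) ↔
      ∀ β : Word n, 1 ≤ FreeMonoid.length β → μ β = μ' β := by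
  constructor
  · rintro ⟨A, hA, hAW⟩ β hβ
    cases β using FreeMonoid.casesOn with
    | one => simp at hβ
    | of_mul i β =>
      by_cases hne : μ (FreeMonoid.of i * β) = 0
      · by_cases hne' : μ' (FreeMonoid.of i * β) = 0
        · rw [hne, hne']
        · exact (weight_eq_of_comp_eq hμ' hμ hW' hW htr' htr (Unitary.star_mem hA)
            (star_comp_eq_of_comp_eq hA hAW) hne').symm
      · exact weight_eq_of_comp_eq hμ hμ' hW hW' htr htr' hA hAW hne
  · intro h
    refine ⟨1, one_mem _, fun i => ?_⟩
    rw [hW.eq_of_weights_eq hW' h]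
    rfl

theorem stmt_8 (n : ℕ) (hn : 1 ≤ n) (μ μ' : Word n → ℝ)
    (hμ : ∀ β : Word n, 1 ≤ FreeMonoid.length β → 0 ≤ μ β)
    (hμ' : ∀ β : Word n, 1 ≤ FreeMonoid.length β → 0 ≤ μ' β)
    (hbdd : BddWeights μ) (hbdd' : BddWeights μ')
    (htr : TruncProp μ) (htr' : TruncProp μ')
    (hzero : ∀ β : Word n, 1 ≤ FreeMonoid.length β → (μ β = 0 ↔ μ' β = 0))
    (W W' : Fin n → Fock n →L[ℂ] Fock n)
    (hW : IsWeightedShift μ W) (hW' : IsWeightedShift μ' W') :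
    (∃ A : Fock n →L[ℂ] Fock n, A ∈ unitary (Fock n →L[ℂ] Fock n) ∧
        ∀ i, A.comp (W i) = (W' i).comp A) ↔
      ∀ β : Word n, 1 ≤ FreeMonoid.length β → μ β = μ' β :=
  stmt_8_general n μ μ' hμ hμ' htr htr' W W' hW hW'

end
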